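/- Let B = {1342, 1432}. For every gap vector (g₁,g₂,g₃) ∈ ℕ³ with g₂ ≤ 1, |Z(B;12;(g₁,g₂,g₃))| = |Z(B;1;(g₁,g₂+g₃))|; that is, the entry 2 of the permutation 12 is ES⁺-reducible with respect to B. -/

import Mathlib

/-- A permutation of arbitrary length: a length `n` together with a
bijection of `Fin n` (0-indexed positions and values). -/
abbrev PermAny : Type := Σ n : ℕ, Equiv.Perm (Fin n)

/-- `β` is contained as a pattern in `π`. -/
def ContainsPat {k n : ℕ} (β : Equiv.Perm (Fin k)) (π : Equiv.Perm (Fin n)) : Prop :=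
  ∃ f : Fin k → Fin n, StrictMono f ∧ ∀ a b : Fin k, β a < β b ↔ π (f a) < π (f b)

/-- `Av(B)`: the permutations avoiding every member of `B`. -/
def AvSet (B : Set PermAny) : Set PermAny :=
  {p | ∀ b ∈ B, ¬ ContainsPat b.2 p.2}

/-- A permutation class: closed downwards under pattern containment. -/
def IsPermClass (C : Set PermAny) : Prop :=
  ∀ p ∈ C, ∀ q : PermAny, ContainsPat q.2 p.2 → q ∈ C

/-- The positions `a,…,b` form an interval of `π`: the corresponding values
form a set of consecutive integers. -/
def IsIntervalAt {n : ℕ} (π : Equiv.Perm (Fin n)) (a b : Fin n) : Prop :=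
  a ≤ b ∧ ∃ c : ℕ,
    (Finset.Icc a b).image (fun i => (π i : ℕ)) = Finset.Icc c (c + ((b : ℕ) - (a : ℕ)))

/-- A permutation is simple when all of its intervals are trivial. -/
def IsSimplePerm {n : ℕ} (π : Equiv.Perm (Fin n)) : Prop :=
  ∀ a b : Fin n, IsIntervalAt π a b → a = b ∨ ((a : ℕ) = 0 ∧ (b : ℕ) = n - 1)

/-- `Z(B;π;g)`: the set of `B`-avoiding permutations of length `k + ‖g‖` whose
`k` smallest values occupy the positions prescribed by the gap vector `g`
and form the pattern `π`.  (0-indexed: entry `π r` sits at position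
`g 0 + ⋯ + g r + r`.) -/
def ZSet (B : Set PermAny) {k : ℕ} (π : Equiv.Perm (Fin k)) (g : Fin (k + 1) → ℕ) :
    Set (Equiv.Perm (Fin (k + ∑ j, g j))) :=
  {p | (⟨k + ∑ j, g j, p⟩ : PermAny) ∈ AvSet B ∧
    ∀ r : Fin k, ∀ i : Fin (k + ∑ j, g j),
      (i : ℕ) = (∑ j ∈ Finset.univ.filter fun j : Fin (k + 1) => (j : ℕ) ≤ (r : ℕ), g j)
          + (r : ℕ) →
      (p i : ℕ) = (π r : ℕ)}

/-- `J(π)`: the set of gap positions `j` such that `Z(B;π;g)` is empty whenever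
`g j > 0`. -/
def JSet (B : Set PermAny) {k : ℕ} (π : Equiv.Perm (Fin k)) : Set (Fin (k + 1)) :=
  {j | ∀ g : Fin (k + 1) → ℕ, 0 < g j → ZSet B π g = ∅}

/-- `d_r(π)`: delete the entry at position `r` from `π` and standardize. -/
def delEntry {k : ℕ} (π : Equiv.Perm (Fin (k + 1))) (r : Fin (k + 1)) : Equiv.Perm (Fin k) :=
  Equiv.removeNone ((finSuccEquiv' r).symm.trans (π.trans (finSuccEquiv' (π r))))

/-- `d_r(g)`: merge the gaps on either side of position `r`. -/
def delGap {k : ℕ} (g : Fin (k + 2) → ℕ) (r : Fin (k + 1)) : Fin (k + 1) → ℕ :=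
  fun j =>
    if (j : ℕ) < (r : ℕ) then g (Fin.castSucc j)
    else if (j : ℕ) = (r : ℕ) then g (Fin.castSucc j) + g j.succ
    else g j.succ

/-- The entry `π r` is ES-reducible for `π` with respect to `B`
(Zeilberger's original notion). -/
def ESRed (B : Set PermAny) {k : ℕ} (π : Equiv.Perm (Fin (k + 1))) (r : Fin (k + 1)) : Prop :=
  ∀ g : Fin (k + 2) → ℕ, (∀ j ∈ JSet B π, g j = 0) →
    (ZSet B π g).ncard = (ZSet B (delEntry π r) (delGap g r)).ncard

/-- The entry `π r` is ES⁺-reducible for `π` with respect to `B`. -/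
def ESPlusRed (B : Set PermAny) {k : ℕ} (π : Equiv.Perm (Fin (k + 1))) (r : Fin (k + 1)) : Prop :=
  ∀ g : Fin (k + 2) → ℕ, (ZSet B π g).Nonempty →
    (ZSet B π g).ncard = (ZSet B (delEntry π r) (delGap g r)).ncard

/-- `G_r(π)`: the largest lower order ideal of gap vectors `g` such that for all
`h ≤ g`, either `Z(B;π;h)` is nonempty or `Z(B;d_r(π);d_r(h))` is empty. -/
def GrSet (B : Set PermAny) {k : ℕ} (π : Equiv.Perm (Fin (k + 1))) (r : Fin (k + 1)) :
    Set (Fin (k + 2) → ℕ) :=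
  {g | ∀ h : Fin (k + 2) → ℕ, h ≤ g →
    (ZSet B π h).Nonempty ∨ ZSet B (delEntry π r) (delGap h r) = ∅}

noncomputable def p1342 : Equiv.Perm (Fin 4) := Equiv.ofBijective ![0, 2, 3, 1] (by decide)
noncomputable def p1432 : Equiv.Perm (Fin 4) := Equiv.ofBijective ![0, 3, 2, 1] (by decide)


section AuxES

open Equiv

/-- Insert a new entry into a permutation: new entry at position `r` with value `v`. -/
def insPerm {m : ℕ} (q : Equiv.Perm (Fin m)) (r v : Fin (m + 1)) : Equiv.Perm (Fin (m + 1)) :=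
  (finSuccEquiv' r).trans ((Equiv.optionCongr q).trans (finSuccEquiv' v).symm)

lemma insPerm_self {m : ℕ} (q : Equiv.Perm (Fin m)) (r v : Fin (m + 1)) :
    insPerm q r v r = v := by
  simp [insPerm, finSuccEquiv'_at, finSuccEquiv'_symm_none]

lemma insPerm_succAbove {m : ℕ} (q : Equiv.Perm (Fin m)) (r v : Fin (m + 1)) (j : Fin m) :
    insPerm q r v (r.succAbove j) = v.succAbove (q j) := by
  simp [insPerm, finSuccEquiv'_succAbove, finSuccEquiv'_symm_some]

lemma insPerm_injective {m : ℕ} (r v : Fin (m + 1)) :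
    Function.Injective (fun q : Equiv.Perm (Fin m) => insPerm q r v) := by
  intro q q' hqq
  ext j
  have h := congrArg (fun e : Equiv.Perm (Fin (m + 1)) => e (r.succAbove j)) hqq
  simp only [insPerm_succAbove] at h
  exact congrArg Fin.val (Fin.succAbove_right_injective h)

lemma insPerm_exists {m : ℕ} (p : Equiv.Perm (Fin (m + 1))) (r : Fin (m + 1)) :
    ∃ q : Equiv.Perm (Fin m), insPerm q r (p r) = p := by
  classical
  refine ⟨Equiv.removeNone ((finSuccEquiv' r).symm.trans (p.trans (finSuccEquiv' (p r)))), ?_⟩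
  set e := (finSuccEquiv' r).symm.trans (p.trans (finSuccEquiv' (p r))) with he
  ext i
  rcases eq_or_ne i r with rfl | hi
  · rw [insPerm_self]
  · obtain ⟨j, rfl⟩ := Fin.exists_succAbove_eq hi
    rw [insPerm_succAbove]
    have hne : p (r.succAbove j) ≠ p r := fun hh => Fin.succAbove_ne r j (p.injective hh)
    obtain ⟨y, hy⟩ := Fin.exists_succAbove_eq hne
    have h1 : e (some j) = some y := by
      rw [he]
      simp only [Equiv.trans_apply, finSuccEquiv'_symm_some, ← hy, finSuccEquiv'_succAbove]
    have h2 : Equiv.removeNone e j = y := by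
      have h3 := Equiv.removeNone_some (e := e) (x := j) ⟨y, h1⟩
      rw [h1] at h3
      exact Option.some_injective _ h3
    rw [h2, hy]

lemma containsPat_insPerm_of {k m : ℕ} (β : Equiv.Perm (Fin k)) (q : Equiv.Perm (Fin m))
    (r v : Fin (m + 1)) (h : ContainsPat β q) : ContainsPat β (insPerm q r v) := by
  obtain ⟨f, hf, hpat⟩ := h
  refine ⟨fun a => r.succAbove (f a), fun a b hab => Fin.strictMono_succAbove r (hf hab),
    fun a b => ?_⟩
  rw [insPerm_succAbove, insPerm_succAbove, Fin.succAbove_lt_succAbove_iff]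
  exact hpat a b

lemma containsPat_of_insPerm {k m : ℕ} (β : Equiv.Perm (Fin k)) (q : Equiv.Perm (Fin m))
    (r v : Fin (m + 1)) (f : Fin k → Fin (m + 1)) (hf : StrictMono f) (hr : ∀ a, f a ≠ r)
    (hpat : ∀ a b, β a < β b ↔ insPerm q r v (f a) < insPerm q r v (f b)) :
    ContainsPat β q := by
  choose f' hf' using fun a => Fin.exists_succAbove_eq (hr a)
  refine ⟨f', fun a b hab => ?_, fun a b => ?_⟩
  · have h1 := hf hab
    rw [← hf' a, ← hf' b] at h1
    exact Fin.succAbove_lt_succAbove_iff.mp h1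
  · rw [hpat a b, ← hf' a, ← hf' b, insPerm_succAbove, insPerm_succAbove,
      Fin.succAbove_lt_succAbove_iff]

lemma mem_avset_pair {n : ℕ} (p : Equiv.Perm (Fin n)) :
    ((⟨n, p⟩ : PermAny) ∈ AvSet ({⟨4, p1342⟩, ⟨4, p1432⟩} : Set PermAny)) ↔
      ¬ ContainsPat p1342 p ∧ ¬ ContainsPat p1432 p := by
  constructor
  · intro hh
    exact ⟨hh ⟨4, p1342⟩ (Set.mem_insert _ _), hh ⟨4, p1432⟩ (Set.mem_insert_of_mem _ rfl)⟩
  · rintro ⟨h1, h2⟩ b hb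
    rcases Set.mem_insert_iff.mp hb with rfl | hb'
    · exact h1
    · obtain rfl := Set.mem_singleton_iff.mp hb'
      exact h2

lemma fin_cast_cast {n n' : ℕ} (h : n = n') (x : Fin n) :
    Fin.cast h.symm (Fin.cast h x) = x := by
  apply Fin.ext
  simp

lemma containsPat_finCongr {k n n' : ℕ} (h : n = n') (β : Equiv.Perm (Fin k))
    (p : Equiv.Perm (Fin n)) :
    ContainsPat β ((finCongr h).permCongr p) ↔ ContainsPat β p := by
  constructor
  · rintro ⟨f, hf, hpat⟩
    refine ⟨fun a => Fin.cast h.symm (f a), fun a b hab => ?_, fun a b => ?_⟩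
    · have h1 := hf hab
      rw [Fin.lt_def] at h1 ⊢
      simpa [Fin.coe_cast] using h1
    · rw [hpat a b]
      simp only [Equiv.permCongr_apply, finCongr_symm, finCongr_apply, Fin.lt_def, Fin.coe_cast]
  · rintro ⟨f, hf, hpat⟩
    refine ⟨fun a => Fin.cast h (f a), fun a b hab => ?_, fun a b => ?_⟩
    · have h1 := hf hab
      rw [Fin.lt_def] at h1 ⊢
      simpa [Fin.coe_cast] using h1
    · rw [hpat a b]
      simp only [Equiv.permCongr_apply, finCongr_symm, finCongr_apply, Fin.lt_def, Fin.coe_cast,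
        fin_cast_cast]

lemma key_avoid {m : ℕ} (q : Equiv.Perm (Fin m)) (r v z : Fin (m + 1))
    (hv : (v : ℕ) = 1) (hz0 : insPerm q r v z = 0) (hzr : (z : ℕ) < (r : ℕ))
    (hr2 : (r : ℕ) ≤ (z : ℕ) + 2)
    (β : Equiv.Perm (Fin 4)) (hβ0 : β 0 = 0) (hβ3 : ((β 3 : Fin 4) : ℕ) = 1)
    (hq : ¬ ContainsPat β q) : ¬ ContainsPat β (insPerm q r v) := by
  rintro ⟨f, hf, hpat⟩
  have noR : ∀ f' : Fin 4 → Fin (m + 1), StrictMono f' → (∀ a, f' a ≠ r) →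
      (∀ a b, β a < β b ↔ insPerm q r v (f' a) < insPerm q r v (f' b)) → False :=
    fun f' h1 h2 h3 => hq (containsPat_of_insPerm β q r v f' h1 h2 h3)
  by_cases hcc : ∃ c, f c = r
  swap
  · push_neg at hcc
    exact noR f hf hcc hpat
  obtain ⟨c, hcr⟩ := hcc
  have hzz : ∀ a, β a < β c → f a = z := by
    intro a ha
    have h1 : insPerm q r v (f a) < insPerm q r v (f c) := (hpat a c).mp ha
    rw [hcr, insPerm_self] at h1
    have h3 := Fin.lt_def.mp h1
    rw [hv] at h3
    have h4 : (insPerm q r v (f a) : ℕ) = 0 := by omega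
    have h2 : insPerm q r v (f a) = 0 := Fin.ext (by simp [h4])
    exact (insPerm q r v).injective (h2.trans hz0.symm)
  have hc4 := (β c).isLt
  rcases Nat.lt_or_ge ((β c : ℕ)) 2 with h2 | h2
  · rcases Nat.lt_or_ge ((β c : ℕ)) 1 with hlt1 | hge1
    · -- β c = 0, hence c = 0 and f 0 = r
      have hc0 : c = 0 := β.injective (show β c = β 0 by
        rw [hβ0]; exact Fin.ext (by simp; omega))
      subst hc0
      refine noR (fun a => if a = 0 then z else f a) ?_ ?_ ?_
      · intro a b hab
        dsimp only
        rcases eq_or_ne a 0 with rfl | ha0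
        · have hb0 : b ≠ 0 := Fin.pos_iff_ne_zero.mp hab
          rw [if_pos rfl, if_neg hb0]
          have h5 : f 0 < f b := hf hab
          have h6 : z < f 0 := by rw [hcr]; exact Fin.lt_def.mpr hzr
          exact h6.trans h5
        · have hb0 : b ≠ 0 := Fin.pos_iff_ne_zero.mp (lt_of_le_of_lt (Fin.zero_le a) hab)
          rw [if_neg ha0, if_neg hb0]
          exact hf hab
      · intro a
        rcases eq_or_ne a 0 with rfl | ha0
        · rw [if_pos rfl]
          exact Fin.ne_of_lt (Fin.lt_def.mpr hzr)
        · rw [if_neg ha0]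
          have h5 : f 0 < f a := hf (Fin.pos_iff_ne_zero.mpr ha0)
          rw [hcr] at h5
          exact ne_of_gt h5
      · intro a b
        rcases eq_or_ne a 0 with rfl | ha0 <;> rcases eq_or_ne b 0 with rfl | hb0
        · simp
        · rw [if_pos rfl, if_neg hb0]
          have l1 : β 0 < β b := by
            rw [hβ0]
            exact Fin.pos_iff_ne_zero.mpr (fun hh => hb0 (β.injective (hh.trans hβ0.symm)))
          have l2 : insPerm q r v z < insPerm q r v (f b) := by
            rw [hz0]
            refine Fin.pos_iff_ne_zero.mpr (fun hh => ?_)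
            have h7 : f b = z := (insPerm q r v).injective (hh.trans hz0.symm)
            have h5 : f 0 < f b := hf (Fin.pos_iff_ne_zero.mpr hb0)
            rw [hcr, h7] at h5
            exact absurd (Fin.lt_def.mp h5) (by omega)
          exact iff_of_true l1 l2
        · rw [if_neg ha0, if_pos rfl]
          refine iff_of_false ?_ ?_
          · rw [hβ0]
            intro hh
            have := Fin.lt_def.mp hh
            simp at this
          · rw [hz0]
            intro hh
            have := Fin.lt_def.mp hh
            simp at this
        · rw [if_neg ha0, if_neg hb0]
          exact hpat a b
    · -- (β c : ℕ) = 1, hence c = 3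
      have hc3 : c = 3 := β.injective (Fin.ext (by omega))
      subst hc3
      have h03 : β 0 < β 3 := Fin.lt_def.mpr (by simp [hβ0, hβ3])
      have hf0 : f 0 = z := hzz 0 h03
      have l01 : (f 0 : ℕ) < (f 1 : ℕ) := Fin.lt_def.mp (hf (by decide))
      have l12 : (f 1 : ℕ) < (f 2 : ℕ) := Fin.lt_def.mp (hf (by decide))
      have l23 : (f 2 : ℕ) < (f 3 : ℕ) := Fin.lt_def.mp (hf (by decide))
      have e0 : (f 0 : ℕ) = (z : ℕ) := congrArg Fin.val hf0
      have e3 : (f 3 : ℕ) = (r : ℕ) := congrArg Fin.val hcr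
      omega
  · -- (β c : ℕ) ≥ 2 : both f 0 and f 3 equal z, contradiction
    have l0 : β 0 < β c := Fin.lt_def.mpr (by simp [hβ0]; omega)
    have l3 : β 3 < β c := Fin.lt_def.mpr (by omega)
    have e03 : f 0 = f 3 := (hzz 0 l0).trans (hzz 3 l3).symm
    have hlt : f 0 < f 3 := hf (by decide)
    rw [e03] at hlt
    exact absurd hlt (lt_irrefl _)

end AuxES

/-- For `B = {1342, 1432}` and every gap vector with `g₂ ≤ 1`,
`|Z(B;12;(g₁,g₂,g₃))| = |Z(B;1;(g₁,g₂+g₃))|`; that is, the entry `2` of `12`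
is ES⁺-reducible with respect to `B`. -/
theorem entry2_of_12_reducible_for_1342_1432 (g : Fin 3 → ℕ) (h : g 1 ≤ 1) :
    (ZSet ({⟨4, p1342⟩, ⟨4, p1432⟩} : Set PermAny)
        (1 : Equiv.Perm (Fin 2)) g).ncard =
    (ZSet ({⟨4, p1342⟩, ⟨4, p1432⟩} : Set PermAny)
        (1 : Equiv.Perm (Fin 1)) ![g 0, g 1 + g 2]).ncard := by
  classical
  have hs3 : ∑ j : Fin 3, g j = g 0 + g 1 + g 2 := by rw [Fin.sum_univ_three]
  have hs2 : ∑ j : Fin 2, (![g 0, g 1 + g 2] : Fin 2 → ℕ) j = g 0 + (g 1 + g 2) := by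
    rw [Fin.sum_univ_two]; simp
  have hL' : 2 + ∑ j : Fin 3, g j = (1 + ∑ j : Fin 2, (![g 0, g 1 + g 2] : Fin 2 → ℕ) j) + 1 := by
    omega
  obtain ⟨ri, hriv⟩ : ∃ ri : Fin ((1 + ∑ j : Fin 2, (![g 0, g 1 + g 2] : Fin 2 → ℕ) j) + 1),
      (ri : ℕ) = g 0 + g 1 + 1 := ⟨⟨g 0 + g 1 + 1, by omega⟩, rfl⟩
  obtain ⟨vi, hviv⟩ : ∃ vi : Fin ((1 + ∑ j : Fin 2, (![g 0, g 1 + g 2] : Fin 2 → ℕ) j) + 1),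
      (vi : ℕ) = 1 := ⟨⟨1, by omega⟩, rfl⟩
  obtain ⟨zi, hziv⟩ : ∃ zi : Fin ((1 + ∑ j : Fin 2, (![g 0, g 1 + g 2] : Fin 2 → ℕ) j) + 1),
      (zi : ℕ) = g 0 := ⟨⟨g 0, by omega⟩, rfl⟩
  obtain ⟨z', hz'v⟩ : ∃ z' : Fin (1 + ∑ j : Fin 2, (![g 0, g 1 + g 2] : Fin 2 → ℕ) j),
      (z' : ℕ) = g 0 := ⟨⟨g 0, by omega⟩, rfl⟩
  obtain ⟨F, hF⟩ : ∃ F : Equiv.Perm (Fin (1 + ∑ j : Fin 2, (![g 0, g 1 + g 2] : Fin 2 → ℕ) j)) →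
      Equiv.Perm (Fin (2 + ∑ j : Fin 3, g j)),
      F = fun q => (finCongr hL'.symm).permCongr (insPerm q ri vi) := ⟨_, rfl⟩
  have hFinj : Function.Injective F := by
    intro q q' hqq
    rw [hF] at hqq
    apply insPerm_injective ri vi
    exact (finCongr hL'.symm).permCongr.injective hqq
  have hsab : ri.succAbove z' = zi := by
    rw [Fin.succAbove_of_castSucc_lt _ _
      (by rw [Fin.lt_def, Fin.coe_castSucc, hz'v, hriv]; omega)]
    exact Fin.ext (by rw [Fin.coe_castSucc, hz'v, hziv])
  have hvs : ∀ x : Fin (1 + ∑ j : Fin 2, (![g 0, g 1 + g 2] : Fin 2 → ℕ) j),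
      (x : ℕ) = 0 → vi.succAbove x = 0 := by
    intro x hx
    rw [Fin.succAbove_of_castSucc_lt _ _
      (by rw [Fin.lt_def, Fin.coe_castSucc, hx, hviv]; omega)]
    exact Fin.ext (by simp [Fin.coe_castSucc, hx])
  have hvs' : ∀ x : Fin (1 + ∑ j : Fin 2, (![g 0, g 1 + g 2] : Fin 2 → ℕ) j),
      (vi.succAbove x : ℕ) = 0 → (x : ℕ) = 0 := by
    intro x hx
    rcases Nat.lt_or_ge (x : ℕ) (vi : ℕ) with hlt | hge
    · rw [Fin.succAbove_of_castSucc_lt _ _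
        (Fin.lt_def.mpr (by rw [Fin.coe_castSucc]; exact hlt))] at hx
      rw [Fin.coe_castSucc] at hx
      exact hx
    · rw [Fin.succAbove_of_le_castSucc _ _
        (Fin.le_def.mpr (by rw [Fin.coe_castSucc]; exact hge))] at hx
      rw [Fin.val_succ] at hx
      omega
  -- sum computations for the position conditions
  have hf0 : (∑ j ∈ Finset.univ.filter (fun j : Fin 3 => (j : ℕ) ≤ ((0 : Fin 2) : ℕ)), g j)
      = g 0 := by
    have hset : Finset.univ.filter (fun j : Fin 3 => (j : ℕ) ≤ ((0 : Fin 2) : ℕ)) = {0} := by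
      decide
    rw [hset, Finset.sum_singleton]
  have hf1 : (∑ j ∈ Finset.univ.filter (fun j : Fin 3 => (j : ℕ) ≤ ((1 : Fin 2) : ℕ)), g j)
      = g 0 + g 1 := by
    have hset : Finset.univ.filter (fun j : Fin 3 => (j : ℕ) ≤ ((1 : Fin 2) : ℕ)) = {0, 1} := by
      decide
    rw [hset, Finset.sum_insert (by decide), Finset.sum_singleton]
  have hfr : (∑ j ∈ Finset.univ.filter (fun j : Fin 2 => (j : ℕ) ≤ ((0 : Fin 1) : ℕ)),
      (![g 0, g 1 + g 2] : Fin 2 → ℕ) j) = g 0 := by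
    have hset : Finset.univ.filter (fun j : Fin 2 => (j : ℕ) ≤ ((0 : Fin 1) : ℕ)) = {0} := by
      decide
    rw [hset, Finset.sum_singleton]
    simp
  -- membership characterizations
  have hmemL : ∀ p : Equiv.Perm (Fin (2 + ∑ j : Fin 3, g j)),
      p ∈ ZSet ({⟨4, p1342⟩, ⟨4, p1432⟩} : Set PermAny) (1 : Equiv.Perm (Fin 2)) g ↔
        ((⟨2 + ∑ j : Fin 3, g j, p⟩ : PermAny) ∈
            AvSet ({⟨4, p1342⟩, ⟨4, p1432⟩} : Set PermAny) ∧
          (∀ i : Fin (2 + ∑ j : Fin 3, g j), (i : ℕ) = g 0 → (p i : ℕ) = 0) ∧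
          (∀ i : Fin (2 + ∑ j : Fin 3, g j), (i : ℕ) = g 0 + g 1 + 1 → (p i : ℕ) = 1)) := by
    intro p
    constructor
    · rintro ⟨hav, hpos⟩
      rw [Fin.forall_fin_two] at hpos
      obtain ⟨hpos0, hpos1⟩ := hpos
      refine ⟨hav, fun i hi => ?_, fun i hi => ?_⟩
      · have h0 := hpos0 i
        rw [hf0] at h0
        simp only [Fin.val_zero, add_zero, Equiv.Perm.coe_one, id_eq] at h0
        exact h0 hi
      · have h1 := hpos1 i
        rw [hf1] at h1
        simp only [Fin.val_one, Equiv.Perm.coe_one, id_eq] at h1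
        exact h1 hi
    · rintro ⟨hav, hp0, hp1⟩
      refine ⟨hav, ?_⟩
      rw [Fin.forall_fin_two]
      constructor
      · intro i hi
        rw [hf0] at hi
        simp only [Fin.val_zero, add_zero] at hi
        simp only [Equiv.Perm.coe_one, id_eq, Fin.val_zero]
        exact hp0 i hi
      · intro i hi
        rw [hf1] at hi
        simp only [Fin.val_one] at hi
        simp only [Equiv.Perm.coe_one, id_eq, Fin.val_one]
        exact hp1 i hi
  have hmemR : ∀ q : Equiv.Perm (Fin (1 + ∑ j : Fin 2, (![g 0, g 1 + g 2] : Fin 2 → ℕ) j)),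
      q ∈ ZSet ({⟨4, p1342⟩, ⟨4, p1432⟩} : Set PermAny) (1 : Equiv.Perm (Fin 1))
          ![g 0, g 1 + g 2] ↔
        ((⟨1 + ∑ j : Fin 2, (![g 0, g 1 + g 2] : Fin 2 → ℕ) j, q⟩ : PermAny) ∈
            AvSet ({⟨4, p1342⟩, ⟨4, p1432⟩} : Set PermAny) ∧
          (∀ i : Fin (1 + ∑ j : Fin 2, (![g 0, g 1 + g 2] : Fin 2 → ℕ) j),
            (i : ℕ) = g 0 → (q i : ℕ) = 0)) := by
    intro q
    constructor
    · rintro ⟨hav, hpos⟩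
      refine ⟨hav, fun i hi => ?_⟩
      have h0 := hpos 0 i
      rw [hfr] at h0
      simp only [Fin.val_zero, add_zero, Equiv.Perm.coe_one, id_eq] at h0
      exact h0 hi
    · rintro ⟨hav, hp0⟩
      refine ⟨hav, fun r i hi => ?_⟩
      have hr0 : r = 0 := Fin.ext (by simp)
      subst hr0
      rw [hfr] at hi
      simp only [Fin.val_zero, add_zero] at hi
      simp only [Equiv.Perm.coe_one, id_eq, Fin.val_zero]
      exact hp0 i hi
  -- pattern value facts
  have hb1 : p1342 0 = 0 := rfl
  have hb2 : ((p1342 3 : Fin 4) : ℕ) = 1 := rfl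
  have hb3 : p1432 0 = 0 := rfl
  have hb4 : ((p1432 3 : Fin 4) : ℕ) = 1 := rfl
  -- the image identity
  have himg : ZSet ({⟨4, p1342⟩, ⟨4, p1432⟩} : Set PermAny) (1 : Equiv.Perm (Fin 2)) g =
      F '' ZSet ({⟨4, p1342⟩, ⟨4, p1432⟩} : Set PermAny) (1 : Equiv.Perm (Fin 1))
        ![g 0, g 1 + g 2] := by
    ext p
    rw [hmemL p]
    constructor
    · rintro ⟨hav, hp0, hp1⟩
      set p' := (finCongr hL').permCongr p with hp'2
      have hp'app : ∀ x, (p' x : ℕ) = (p (Fin.cast hL'.symm x) : ℕ) := by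
        intro x
        rw [hp'2]
        simp only [Equiv.permCongr_apply, finCongr_symm, finCongr_apply, Fin.coe_cast]
      have hp'ri : p' ri = vi := by
        apply Fin.ext
        rw [hp'app ri, hviv]
        apply hp1
        rw [Fin.coe_cast, hriv]
      obtain ⟨q, hq⟩ := insPerm_exists p' ri
      rw [hp'ri] at hq
      refine ⟨q, ?_, ?_⟩
      · refine (hmemR q).mpr ⟨?_, ?_⟩
        · rw [mem_avset_pair]
          rw [mem_avset_pair] at hav
          constructor
          · intro hc
            apply hav.1
            have hc2 : ContainsPat p1342 (insPerm q ri vi) := containsPat_insPerm_of _ _ _ _ hc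
            rw [hq, hp'2] at hc2
            exact (containsPat_finCongr hL' p1342 p).mp hc2
          · intro hc
            apply hav.2
            have hc2 : ContainsPat p1432 (insPerm q ri vi) := containsPat_insPerm_of _ _ _ _ hc
            rw [hq, hp'2] at hc2
            exact (containsPat_finCongr hL' p1432 p).mp hc2
        · intro i hi
          have hiz : i = z' := Fin.ext (by rw [hz'v]; exact hi)
          rw [hiz]
          have h5 : insPerm q ri vi (ri.succAbove z') = vi.succAbove (q z') :=
            insPerm_succAbove q ri vi z'
          rw [hsab, hq] at h5
          have h6 : (p' zi : ℕ) = 0 := by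
            rw [hp'app zi]
            exact hp0 _ (by rw [Fin.coe_cast, hziv])
          exact hvs' _ (by rw [← h5]; exact h6)
      · rw [hF]
        dsimp only
        rw [hq, hp'2]
        calc (finCongr hL'.symm).permCongr ((finCongr hL').permCongr p)
            = ((finCongr hL').permCongr).symm ((finCongr hL').permCongr p) := by
              rw [Equiv.permCongr_symm, finCongr_symm]
          _ = p := Equiv.symm_apply_apply _ _
    · rintro ⟨q, hqZ, rfl⟩
      obtain ⟨hav', hq0⟩ := (hmemR q).mp hqZ
      have hqz' : (q z' : ℕ) = 0 := hq0 z' hz'v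
      have hz00 : insPerm q ri vi zi = 0 := by
        rw [← hsab, insPerm_succAbove]
        exact hvs _ hqz'
      have hFval : ∀ i : Fin (2 + ∑ j : Fin 3, g j),
          (F q i : ℕ) = (insPerm q ri vi (Fin.cast hL' i) : ℕ) := by
        intro i
        rw [hF]
        simp only [Equiv.permCongr_apply, finCongr_symm, finCongr_apply, Fin.coe_cast]
      rw [mem_avset_pair] at hav'
      refine ⟨?_, ?_, ?_⟩
      · rw [mem_avset_pair]
        constructor
        · intro hc
          rw [hF] at hc
          dsimp only at hc
          have hc2 := (containsPat_finCongr hL'.symm p1342 (insPerm q ri vi)).mp hc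
          exact key_avoid q ri vi zi hviv hz00 (by rw [hziv, hriv]; omega)
            (by rw [hziv, hriv]; omega) p1342 hb1 hb2 hav'.1 hc2
        · intro hc
          rw [hF] at hc
          dsimp only at hc
          have hc2 := (containsPat_finCongr hL'.symm p1432 (insPerm q ri vi)).mp hc
          exact key_avoid q ri vi zi hviv hz00 (by rw [hziv, hriv]; omega)
            (by rw [hziv, hriv]; omega) p1432 hb3 hb4 hav'.2 hc2
      · intro i hi
        rw [hFval i]
        have hci : Fin.cast hL' i = ri.succAbove z' := by
          rw [hsab]
          exact Fin.ext (by rw [Fin.coe_cast, hziv]; exact hi)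
        rw [hci, insPerm_succAbove, hvs _ hqz']
        simp
      · intro i hi
        rw [hFval i]
        have hci : Fin.cast hL' i = ri := Fin.ext (by rw [Fin.coe_cast, hriv]; exact hi)
        rw [hci, insPerm_self, hviv]
  rw [himg, Set.ncard_image_of_injective _ hFinj]
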